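/- arXiv:1802.06511 — 3 statements merged into one kernel-verified Lean document; each statement's English description precedes it below -/
import Mathlib

section
/- Let S and S' be c-colorable vertex sets in a graph G with |S| = |S'| = k+1. Then there is a TAR(k)-reconfiguration sequence between S and S' (each step adds or removes one vertex, all intermediate sets are c-colorable of size at least k) if and only if there is a TJ-reconfiguration sequence between S and S' (each step exchanges one vertex of the set for one vertex outside, all intermediate sets are c-colorable of size k+1). -/
open Finset

variable {V : Type*}

/-- `S` is a `c`-colorable vertex set in `G`. -/
def ColSet (G : SimpleGraph V) (c : ℕ) (S : Finset V) : Prop :=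
  (G.induce (S : Set V)).Colorable c

/-- One TAR(k) step between `c`-colorable sets. -/
def TARStep (G : SimpleGraph V) (c k : ℕ) [DecidableEq V] (A B : Finset V) : Prop :=
  ColSet G c A ∧ ColSet G c B ∧ k ≤ A.card ∧ k ≤ B.card ∧ (symmDiff A B).card = 1

/-- One TJ step between `c`-colorable sets. -/
def TJStep (G : SimpleGraph V) (c : ℕ) [DecidableEq V] (A B : Finset V) : Prop :=
  ColSet G c A ∧ ColSet G c B ∧ (A \ B).card = 1 ∧ (B \ A).card = 1

/-- `l` is a TAR(k)-reconfiguration sequence from `S` to `S'`. -/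
def TARSeq (G : SimpleGraph V) (c k : ℕ) [DecidableEq V] (S S' : Finset V)
    (l : List (Finset V)) : Prop :=
  l.head? = some S ∧ l.getLast? = some S' ∧ l.Chain' (TARStep G c k)

def TJSeq (G : SimpleGraph V) (c : ℕ) [DecidableEq V] (S S' : Finset V)
    (l : List (Finset V)) : Prop :=
  l.head? = some S ∧ l.getLast? = some S' ∧ l.Chain' (TJStep G c)

def TARReach (G : SimpleGraph V) (c k : ℕ) [DecidableEq V] (S S' : Finset V) : Prop :=
  ∃ l, TARSeq G c k S S' l

def TJReach (G : SimpleGraph V) (c : ℕ) [DecidableEq V] (S S' : Finset V) : Prop :=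
  ∃ l, TJSeq G c S S' l

/-- Length of a shortest TAR(k)-sequence (number of steps), `⊤` if none exists. -/
noncomputable def TARDist (G : SimpleGraph V) (c k : ℕ) [DecidableEq V]
    (S S' : Finset V) : ℕ∞ :=
  sInf {n : ℕ∞ | ∃ l, TARSeq G c k S S' l ∧ (l.length : ℕ∞) = n + 1}

noncomputable def TJDist (G : SimpleGraph V) (c : ℕ) [DecidableEq V]
    (S S' : Finset V) : ℕ∞ :=
  sInf {n : ℕ∞ | ∃ l, TJSeq G c S S' l ∧ (l.length : ℕ∞) = n + 1}

/-- `S` is a maximal `c`-colorable set among subsets of `U`, of size exactly `k`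
(`S` is "locked" in `G[U]`). -/
def LockedIn (G : SimpleGraph V) (c k : ℕ) (U S : Finset V) : Prop :=
  S.card = k ∧ ColSet G c S ∧ S ⊆ U ∧
    ∀ T ⊆ U, ColSet G c T → S ⊆ T → T = S

/-- `S` is locked in `G` itself. -/
def Locked [Fintype V] (G : SimpleGraph V) (c k : ℕ) (S : Finset V) : Prop :=
  LockedIn G c k Finset.univ S

/-- `G` is an interval graph. -/
def IsIntervalGraph (G : SimpleGraph V) : Prop :=
  ∃ l r : V → ℝ, (∀ v, l v ≤ r v) ∧
    ∀ u v, G.Adj u v ↔ u ≠ v ∧ max (l u) (l v) ≤ min (r u) (r v)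

/-- `G` is perfect: every induced subgraph has chromatic number equal to its
clique number, stated via the colorability/clique-free characterization. -/
def IsPerfect (G : SimpleGraph V) : Prop :=
  ∀ (S : Set V) (c : ℕ), (G.induce S).Colorable c ↔ (G.induce S).CliqueFree (c + 1)

/-!
A TJ move that exchanges `u` for `v` is the TAR(k) detour "remove `u`, then add `v`" through a
set of size `k`, so TJ-reachability implies TAR(k)-reachability. Conversely, along a TAR(k)
sequence `A₀ = S, A₁, …` we keep a *TJ-shadow* of `Aᵢ`: a TJ-reachable colorable set `C` of
size `k + 1` that is comparable with `Aᵢ` under inclusion. When `Aᵢ` moves away from `C`,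
either `C` stays comparable, or `Aᵢ₊₁` contains a `(k + 1)`-set (colorable, as a subset of
`Aᵢ₊₁`) that shares `k` vertices with `C`, one TJ move away. At the end `C` and `S'` are
comparable sets of the same size, hence equal.
-/

section Reachability

variable {α : Type*} {r : α → α → Prop} {a b : α}

theorem exists_isChain_iff_reflTransGen :
    (∃ l : List α, l.head? = some a ∧ l.getLast? = some b ∧ l.IsChain r) ↔
      Relation.ReflTransGen r a b := by
  constructor
  · rintro ⟨_ | ⟨a', l⟩, hhead, hlast, hchain⟩
    · simp at hhead
    · obtain rfl : a' = a := by simpa using hhead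
      rw [List.getLast?_eq_some_getLast (List.cons_ne_nil _ _), Option.some_inj] at hlast
      exact List.relationReflTransGen_of_exists_isChain_cons l hchain hlast
  · intro h
    obtain ⟨l, hchain, hlast⟩ := List.exists_isChain_cons_of_relationReflTransGen h
    refine ⟨a :: l, rfl, ?_, hchain⟩
    rw [List.getLast?_eq_some_getLast (List.cons_ne_nil _ _), hlast]

end Reachability

theorem Finset.subset_and_card_eq_or_of_card_symmDiff_eq_one {α : Type*} [DecidableEq α]
    {A B : Finset α} (h : #(symmDiff A B) = 1) :
    (A ⊆ B ∧ #B = #A + 1) ∨ (B ⊆ A ∧ #A = #B + 1) := by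
  rw [Finset.symmDiff_def, card_union_of_disjoint disjoint_sdiff_sdiff] at h
  rcases Nat.add_eq_one_iff.mp h with ⟨hAB, hBA⟩ | ⟨hAB, hBA⟩
  · have hsub : A ⊆ B := sdiff_eq_empty_iff_subset.mp (card_eq_zero.mp hAB)
    exact .inl ⟨hsub, by rw [← card_sdiff_add_card_eq_card hsub, hBA, add_comm]⟩
  · have hsub : B ⊆ A := sdiff_eq_empty_iff_subset.mp (card_eq_zero.mp hBA)
    exact .inr ⟨hsub, by rw [← card_sdiff_add_card_eq_card hsub, hAB, add_comm]⟩

section Reconfiguration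

variable {G : SimpleGraph V} {c k : ℕ} {S S' A B C D : Finset V}

theorem ColSet.subset (hS : ColSet G c S) (h : A ⊆ S) : ColSet G c A :=
  hS.of_hom (SimpleGraph.induceHomOfLE G (coe_subset.mpr h)).toHom

variable [DecidableEq V]

theorem tarReach_iff_reflTransGen :
    TARReach G c k S S' ↔ Relation.ReflTransGen (TARStep G c k) S S' :=
  exists_isChain_iff_reflTransGen

theorem tjReach_iff_reflTransGen :
    TJReach G c S S' ↔ Relation.ReflTransGen (TJStep G c) S S' :=
  exists_isChain_iff_reflTransGen

theorem TARStep.symm (h : TARStep G c k A B) : TARStep G c k B A :=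
  let ⟨hA, hB, hkA, hkB, hAB⟩ := h
  ⟨hB, hA, hkB, hkA, symmDiff_comm A B ▸ hAB⟩

theorem tarStep_of_subset (hB : ColSet G c B) (hAB : A ⊆ B) (hk : k ≤ #A)
    (hcard : #(B \ A) = 1) : TARStep G c k A B :=
  ⟨hB.subset hAB, hB, hk, hk.trans (card_le_card hAB), by rwa [symmDiff_of_le hAB]⟩

theorem TJStep.card_eq (h : TJStep G c A B) : #B = #A := by
  obtain ⟨-, -, hAB, hBA⟩ := h
  have hA := card_sdiff_add_card_inter A B
  have hB := card_sdiff_add_card_inter B A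
  rw [inter_comm] at hB
  omega

theorem TJStep.reflTransGen_tarStep (h : TJStep G c A B) (hA : #A = k + 1) :
    Relation.ReflTransGen (TARStep G c k) A B := by
  obtain ⟨hAcol, hBcol, hAB, hBA⟩ := h
  have hinter : #(A ∩ B) = k := by
    have := card_sdiff_add_card_inter A B
    omega
  have hdown : TARStep G c k (A ∩ B) A :=
    tarStep_of_subset hAcol inter_subset_left hinter.ge (by rwa [sdiff_inter_self_left])
  have hup : TARStep G c k (A ∩ B) B :=
    tarStep_of_subset hBcol inter_subset_right hinter.ge (by rwa [sdiff_inter_self_right])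
  exact .tail (.single hdown.symm) hup

theorem reflTransGen_tarStep_of_tjStep (h : Relation.ReflTransGen (TJStep G c) S S')
    (hS : #S = k + 1) : #S' = k + 1 ∧ Relation.ReflTransGen (TARStep G c k) S S' := by
  induction h with
  | refl => exact ⟨hS, .refl⟩
  | tail _ hAB ih => exact ⟨hAB.card_eq.trans ih.1, ih.2.trans (hAB.reflTransGen_tarStep ih.1)⟩

theorem tjStep_of_card_inter (hC : ColSet G c C) (hD : ColSet G c D) (hCcard : #C = k + 1)
    (hDcard : #D = k + 1) (hinter : #(C ∩ D) = k) : TJStep G c C D := by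
  have hCD := card_sdiff_add_card_inter C D
  have hDC := card_sdiff_add_card_inter D C
  rw [inter_comm] at hDC
  exact ⟨hC, hD, by omega, by omega⟩

theorem reflTransGen_tjStep_of_le_card_inter (hC : ColSet G c C) (hD : ColSet G c D)
    (hCcard : #C = k + 1) (hDcard : #D = k + 1) (hinter : k ≤ #(C ∩ D)) :
    Relation.ReflTransGen (TJStep G c) C D := by
  rcases hinter.eq_or_lt with hk | hk
  · exact .single (tjStep_of_card_inter hC hD hCcard hDcard hk.symm)
  · have hCD : C ∩ D = C := eq_of_subset_of_card_le inter_subset_left (by omega)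
    rw [eq_of_subset_of_card_le (inter_eq_left.mp hCD) (by omega)]

def IsTJShadow (G : SimpleGraph V) (c k : ℕ) (S A C : Finset V) : Prop :=
  #C = k + 1 ∧ ColSet G c C ∧ Relation.ReflTransGen (TJStep G c) S C ∧ (C ⊆ A ∨ A ⊆ C)

theorem IsTJShadow.of_add (hC : IsTJShadow G c k S A C) (hB : ColSet G c B) (hAB : A ⊆ B)
    (hcard : #B = #A + 1) (hk : k ≤ #A) : ∃ D, IsTJShadow G c k S B D := by
  obtain ⟨hCcard, hCcol, hSC, hCA | hAC⟩ := hC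
  · exact ⟨C, hCcard, hCcol, hSC, .inl (hCA.trans hAB)⟩
  have hAle := card_le_card hAC
  rcases (show #A = k ∨ #A = k + 1 by omega) with hAk | hAk
  · have hinter : k ≤ #(C ∩ B) := hAk ▸ card_le_card (subset_inter hAC hAB)
    have hBcard : #B = k + 1 := by omega
    exact ⟨B, hBcard, hB,
      hSC.trans (reflTransGen_tjStep_of_le_card_inter hCcol hB hCcard hBcard hinter), .inl le_rfl⟩
  · obtain rfl : A = C := eq_of_subset_of_card_le hAC (by omega)
    exact ⟨A, hCcard, hCcol, hSC, .inl hAB⟩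

theorem IsTJShadow.of_remove (hC : IsTJShadow G c k S A C) (hB : ColSet G c B) (hBA : B ⊆ A)
    (hcard : #A = #B + 1) (hk : k ≤ #B) : ∃ D, IsTJShadow G c k S B D := by
  obtain ⟨hCcard, hCcol, hSC, hCA | hAC⟩ := hC
  swap
  · exact ⟨C, hCcard, hCcol, hSC, .inr (hBA.trans hAC)⟩
  rcases hk.eq_or_lt with hBk | hBk
  · obtain rfl : C = A := eq_of_subset_of_card_le hCA (by omega)
    exact ⟨C, hCcard, hCcol, hSC, .inr hBA⟩
  have hCB : k ≤ #(C ∩ B) := by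
    have hsplit := card_sdiff_add_card_inter C B
    have hout : #(C \ B) ≤ 1 := by
      have := card_le_card (sdiff_subset_sdiff hCA (le_refl B))
      have := card_sdiff_add_card_eq_card hBA
      omega
    omega
  obtain ⟨D, hCBD, hDB, hDcard⟩ :=
    exists_subsuperset_card_eq inter_subset_right (hCcard ▸ card_le_card inter_subset_left) hBk
  have hinter : k ≤ #(C ∩ D) := hCB.trans (card_le_card (subset_inter inter_subset_left hCBD))
  exact ⟨D, hDcard, hB.subset hDB,
    hSC.trans (reflTransGen_tjStep_of_le_card_inter hCcol (hB.subset hDB) hCcard hDcard hinter),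
    .inl hDB⟩

theorem IsTJShadow.of_tarStep (hC : IsTJShadow G c k S A C) (h : TARStep G c k A B) :
    ∃ D, IsTJShadow G c k S B D := by
  obtain ⟨-, hB, hkA, hkB, hAB⟩ := h
  rcases Finset.subset_and_card_eq_or_of_card_symmDiff_eq_one hAB with
    ⟨hAB, hcard⟩ | ⟨hBA, hcard⟩
  · exact hC.of_add hB hAB hcard hkA
  · exact hC.of_remove hB hBA hcard hkB

theorem exists_isTJShadow (h : Relation.ReflTransGen (TARStep G c k) S S') (hS : ColSet G c S)
    (hcard : #S = k + 1) : ∃ C, IsTJShadow G c k S S' C := by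
  induction h with
  | refl => exact ⟨S, hcard, hS, .refl, .inl le_rfl⟩
  | tail _ hAB ih =>
    obtain ⟨C, hC⟩ := ih
    exact hC.of_tarStep hAB

end Reconfiguration

theorem tar_reach_iff_tj_reach_general {V : Type*} [DecidableEq V] (G : SimpleGraph V)
    (c k : ℕ) (S S' : Finset V) (hS : ColSet G c S)
    (hcard : S.card = k + 1) (hcard' : S'.card = k + 1) :
    TARReach G c k S S' ↔ TJReach G c S S' := by
  rw [tarReach_iff_reflTransGen, tjReach_iff_reflTransGen]
  refine ⟨fun h => ?_, fun h => (reflTransGen_tarStep_of_tjStep h hcard).2⟩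
  obtain ⟨C, hCcard, -, hSC, hCS' | hS'C⟩ := exists_isTJShadow h hS hcard
  · rwa [← eq_of_subset_of_card_le hCS' (by omega)]
  · rwa [eq_of_subset_of_card_le hS'C (by omega)]

theorem tar_reach_iff_tj_reach {V : Type*} [DecidableEq V] (G : SimpleGraph V)
    (c k : ℕ) (S S' : Finset V) (hS : ColSet G c S) (hS' : ColSet G c S')
    (hcard : S.card = k + 1) (hcard' : S'.card = k + 1) :
    TARReach G c k S S' ↔ TJReach G c S S' :=
  tar_reach_iff_tj_reach_general G c k S S' hS hcard hcard'
end

section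
/- Let G be an interval graph and S, S' distinct c-colorable sets of size at least k, both locked in G[S ∪ S'] but neither locked in G. If there exists a vertex v ∉ S ∪ S' such that both S + v and S' + v are c-colorable in G, then the TAR(k)-distance between S and S' is |S △ S'| + 2; otherwise it is |S △ S'| + 4. -/
open Finset

variable {V : Type*}

/-!
Model TAR(k)-sequences as walks in the reconfiguration graph `tarGraph`, so that `TARDist` is its
extended distance. As `S` has size `k` and is maximal in `S ∪ S'`, a walk out of `S` must start by
adding a vertex `x ∉ S ∪ S'`; symmetrically a walk into `S'` ends by removing some `y ∉ S ∪ S'`,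
and the walk in between has length at least `|(S + x) ∆ (S' + y)|`, which is `|S ∆ S'|` when
`x = y` and `|S ∆ S'| + 2` otherwise.

Conversely, in an interval graph a set is `c`-colorable iff its intervals cover every point at most
`c` times. Trading the interval of `A ∆ B` that ends first for the leftmost interval on the other
side keeps this property, so two `c`-colorable sets of equal size `> k` are joined by a walk of
length `|A ∆ B|` made of removal-then-addition steps.
-/

namespace Finset

variable [DecidableEq V] {A B : Finset V} {x y : V}

theorem card_symmDiff (A B : Finset V) : (symmDiff A B).card = (A \ B).card + (B \ A).card := by
  rw [symmDiff_def, sup_eq_union, card_union_of_disjoint disjoint_sdiff_sdiff]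

theorem card_symmDiff_triangle (A B C : Finset V) :
    (symmDiff A C).card ≤ (symmDiff A B).card + (symmDiff B C).card :=
  (card_le_card (symmDiff_triangle A B C)).trans (card_union_le _ _)

theorem exists_notMem_eq_insert_of_card_symmDiff_eq_one (h : (symmDiff A B).card = 1)
    (hAB : A.card ≤ B.card) : ∃ x ∉ A, B = insert x A := by
  have hA := card_sdiff_add_card_inter A B
  have hB := card_sdiff_add_card_inter B A
  rw [inter_comm] at hB
  rw [card_symmDiff] at h
  obtain ⟨x, hx⟩ := card_eq_one.1 (show (B \ A).card = 1 by omega)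
  have hAsubB : A ⊆ B := sdiff_eq_empty_iff_subset.1 (card_eq_zero.1 (by omega))
  refine ⟨x, fun hxA => by simpa [hxA] using hx.ge (mem_singleton_self x), ?_⟩
  rw [← union_sdiff_of_subset hAsubB, hx, union_comm, ← insert_eq]

theorem card_symmDiff_insert (hx : x ∉ A) : (symmDiff A (insert x A)).card = 1 := by
  rw [card_symmDiff, sdiff_eq_empty_iff_subset.2 (subset_insert x A), insert_sdiff_of_notMem _ hx,
    sdiff_self]
  simp

theorem card_symmDiff_erase (hx : x ∈ A) : (symmDiff A (A.erase x)).card = 1 := by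
  rw [card_symmDiff, sdiff_eq_empty_iff_subset.2 (erase_subset x A), sdiff_erase_self hx]
  simp

theorem card_symmDiff_insert_insert (hx : x ∉ A ∪ B) (hy : y ∉ A ∪ B) :
    (symmDiff (insert x A) (insert y B)).card = (symmDiff A B).card + if x = y then 0 else 2 := by
  split_ifs with hxy
  · subst hxy
    congr 1
    ext z
    simp only [mem_symmDiff, mem_insert]
    grind
  · have : symmDiff (insert x A) (insert y B) = insert x (insert y (symmDiff A B)) := by
      ext z
      simp only [mem_symmDiff, mem_insert]
      grind
    rw [this, card_insert_of_notMem, card_insert_of_notMem] <;> grind [mem_symmDiff]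

theorem symmDiff_insert_erase (hx : x ∈ A \ B) (hy : y ∈ B \ A) :
    symmDiff (insert y (A.erase x)) B = ((symmDiff A B).erase x).erase y := by
  ext z
  simp only [mem_symmDiff, mem_insert, mem_erase, mem_sdiff] at *
  grind

end Finset

namespace ColSet

variable {G : SimpleGraph V} {c : ℕ} {S T : Finset V}

theorem iff_exists_nat_coloring :
    ColSet G c S ↔ ∃ f : V → ℕ, (∀ x ∈ S, f x < c) ∧
      ∀ x ∈ S, ∀ y ∈ S, G.Adj x y → f x ≠ f y := by
  classical
  constructor
  · rintro ⟨C⟩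
    refine ⟨fun x => if hx : x ∈ S then C ⟨x, hx⟩ else 0, fun x hx => by simp [hx],
      fun x hx y hy hxy => ?_⟩
    simpa [hx, hy, Fin.val_inj] using C.valid (v := ⟨x, hx⟩) (w := ⟨y, hy⟩) hxy
  · rintro ⟨f, hlt, hf⟩
    exact ⟨.mk (fun x => ⟨f x, hlt x x.2⟩) fun {x y} hxy heq =>
      hf x x.2 y y.2 hxy (congrArg Fin.val heq)⟩

theorem mono (hST : S ⊆ T) (hT : ColSet G c T) : ColSet G c S := by
  obtain ⟨f, hlt, hf⟩ := iff_exists_nat_coloring.1 hT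
  exact iff_exists_nat_coloring.2
    ⟨f, fun x hx => hlt x (hST hx), fun x hx y hy => hf x (hST hx) y (hST hy)⟩

theorem empty : ColSet G c ∅ :=
  iff_exists_nat_coloring.2 ⟨0, by simp, by simp⟩

theorem insert [DecidableEq V] [DecidableRel G.Adj] {a : V} (hS : ColSet G c S)
    (ha : (S.filter (G.Adj a)).card < c) : ColSet G c (insert a S) := by
  obtain ⟨f, hlt, hf⟩ := iff_exists_nat_coloring.1 hS
  obtain ⟨j, hjc, hj⟩ : ∃ j ∈ range c, j ∉ (S.filter (G.Adj a)).image f :=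
    exists_mem_notMem_of_card_lt_card (by simpa using card_image_le.trans_lt ha)
  have hfree : ∀ y ∈ S, G.Adj a y → j ≠ f y := fun y hy hay hjy =>
    hj (mem_image.2 ⟨y, mem_filter.2 ⟨hy, hay⟩, hjy.symm⟩)
  refine iff_exists_nat_coloring.2 ⟨Function.update f a j, fun x hx => ?_, fun x hx y hy hxy => ?_⟩
  · rcases eq_or_ne x a with rfl | hxa
    · simpa using hjc
    · simpa [hxa] using hlt x ((mem_insert.1 hx).resolve_left hxa)
  · have hx' := mem_insert.1 hx
    have hy' := mem_insert.1 hy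
    rcases eq_or_ne x a with rfl | hxa <;> rcases eq_or_ne y x with rfl | hyx
    · exact absurd hxy G.irrefl
    · simpa [hyx] using hfree y (hy'.resolve_left hyx) hxy
    · exact absurd hxy G.irrefl
    · rcases eq_or_ne y a with rfl | hya
      · simpa [hxa] using (hfree x (hx'.resolve_left hxa) hxy.symm).symm
      · simpa [hxa, hya] using hf x (hx'.resolve_left hxa) y (hy'.resolve_left hya) hxy

end ColSet

def IsIntervalModel (G : SimpleGraph V) (l r : V → ℝ) : Prop :=
  (∀ v, l v ≤ r v) ∧ ∀ u v, G.Adj u v ↔ u ≠ v ∧ max (l u) (l v) ≤ min (r u) (r v)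

noncomputable def stabbed (l r : V → ℝ) (X : Finset V) (p : ℝ) : Finset V :=
  X.filter fun u => l u ≤ p ∧ p ≤ r u

namespace IsIntervalModel

variable {G : SimpleGraph V} {l r : V → ℝ} {c : ℕ}

theorem adj_of_mem_stabbed (hm : IsIntervalModel G l r) {X : Finset V} {p : ℝ} {u v : V}
    (hu : u ∈ stabbed l r X p) (hv : v ∈ stabbed l r X p) (huv : u ≠ v) : G.Adj u v := by
  simp only [stabbed, mem_filter] at hu hv
  exact (hm.2 u v).2 ⟨huv, (max_le hu.2.1 hv.2.1).trans (le_min hu.2.2 hv.2.2)⟩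

theorem card_stabbed_le (hm : IsIntervalModel G l r) {X : Finset V} (hX : ColSet G c X)
    (p : ℝ) : (stabbed l r X p).card ≤ c := by
  obtain ⟨f, hlt, hf⟩ := ColSet.iff_exists_nat_coloring.1 hX
  have hX' : stabbed l r X p ⊆ X := filter_subset _ _
  simpa using card_le_card_of_injOn f (fun x hx => mem_range.2 (hlt x (hX' hx)))
    fun x hx y hy hfxy => by_contra fun hxy =>
      hf x (hX' hx) y (hX' hy) (hm.adj_of_mem_stabbed hx hy hxy) hfxy

theorem colSet_of_card_stabbed_le (hm : IsIntervalModel G l r) (X : Finset V)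
    (hX : ∀ p, (stabbed l r X p).card ≤ c) : ColSet G c X := by
  classical
  induction X using Finset.induction_on_max_value l with
  | empty => exact ColSet.empty
  | insert a X haX hmax ih =>
    refine (ih fun p => (card_le_card (filter_subset_filter _ (subset_insert a X))).trans
      (hX p)).insert ((card_lt_card ?_).trans_le (hX (l a)))
    -- `l a` is the largest left endpoint, so it lies in the interval of every neighbour of `a`
    have hsub : X.filter (G.Adj a) ⊆ stabbed l r (insert a X) (l a) := fun x hx => by
      obtain ⟨hxX, hax⟩ := mem_filter.1 hx
      have hlr := ((hm.2 a x).1 hax).2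
      exact mem_filter.2 ⟨mem_insert_of_mem hxX, hmax x hxX,
        (le_max_left _ _).trans (hlr.trans (min_le_right _ _))⟩
    exact (ssubset_iff_of_subset hsub).2 ⟨a, mem_filter.2 ⟨mem_insert_self a X, le_rfl, hm.1 a⟩,
      fun ha => haX (mem_filter.1 ha).1⟩

theorem colSet_iff (hm : IsIntervalModel G l r) {X : Finset V} :
    ColSet G c X ↔ ∀ p, (stabbed l r X p).card ≤ c :=
  ⟨hm.card_stabbed_le, hm.colSet_of_card_stabbed_le X⟩

theorem exists_colSet_exchange [DecidableEq V] (hm : IsIntervalModel G l r) {A B : Finset V}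
    (hA : ColSet G c A) (hB : ColSet G c B) {b : V} (hb : b ∈ B \ A)
    (hbmin : ∀ x ∈ A \ B, r b ≤ r x) (hAB : (A \ B).Nonempty) :
    ∃ a ∈ A \ B, ColSet G c (insert b (A.erase a)) := by
  rw [hm.colSet_iff] at hA hB
  obtain ⟨a, ha, hamin⟩ := (A \ B).exists_min_image l hAB
  refine ⟨a, ha, hm.colSet_iff.2 fun p => ?_⟩
  have herase : stabbed l r (A.erase a) p = (stabbed l r A p).erase a := filter_erase _ _ _
  rw [stabbed, filter_insert, ← stabbed, herase]
  split_ifs with hbp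
  · refine card_insert_le _ _ |>.trans ?_
    by_cases hap : a ∈ stabbed l r A p
    · have := card_pos.2 ⟨a, hap⟩
      rw [card_erase_of_mem hap]
      have := hA p
      omega
    · rw [erase_eq_of_notMem hap]
      -- if `p` were covered `c` times by `A`, it would meet an interval of `A \ B`,
      -- and then also the interval of `a`, which starts first and ends after `r b`
      refine Nat.succ_le_of_lt ((hA p).lt_of_ne fun hfull => hap ?_)
      have hbstab : b ∈ stabbed l r B p := mem_filter.2 ⟨(mem_sdiff.1 hb).1, hbp⟩
      have hnsub : ¬ stabbed l r A p ⊆ stabbed l r B p := fun hsub => by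
        have := card_lt_card ((ssubset_iff_of_subset hsub).2
          ⟨b, hbstab, fun h => (mem_sdiff.1 hb).2 (mem_filter.1 h).1⟩)
        have := hB p
        omega
      obtain ⟨x, hxA, hxB⟩ := not_subset.1 hnsub
      obtain ⟨hxA, hlx, hrx⟩ := mem_filter.1 hxA
      have hxAB : x ∈ A \ B := mem_sdiff.2 ⟨hxA, fun h => hxB (mem_filter.2 ⟨h, hlx, hrx⟩)⟩
      exact mem_filter.2 ⟨(mem_sdiff.1 ha).1, (hamin x hxAB).trans hlx,
        hbp.2.trans (hbmin a ha)⟩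
  · exact (card_le_card (erase_subset _ _)).trans (hA p)

end IsIntervalModel

section Reconfiguration

variable [DecidableEq V] {G : SimpleGraph V} {c k : ℕ}

def tarGraph (G : SimpleGraph V) (c k : ℕ) : SimpleGraph (Finset V) where
  Adj := TARStep G c k
  symm := ⟨fun _ _ h => ⟨h.2.1, h.1, h.2.2.2.1, h.2.2.1, by rw [symmDiff_comm]; exact h.2.2.2.2⟩⟩
  loopless := ⟨fun _ h => by simpa using h.2.2.2.2⟩

theorem tarDist_eq_edist (G : SimpleGraph V) (c k : ℕ) (S S' : Finset V) :
    TARDist G c k S S' = (tarGraph G c k).edist S S' := by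
  rw [TARDist, SimpleGraph.edist_eq_sInf]
  congr 1
  ext n
  constructor
  · rintro ⟨L, ⟨hhead, hlast, hchain⟩, hlen⟩
    have hL : L ≠ [] := by rintro rfl; simp at hhead
    have hS : L.head hL = S := by simpa [List.head?_eq_some_head hL] using hhead
    have hS' : L.getLast hL = S' := by simpa [List.getLast?_eq_some_getLast hL] using hlast
    refine ⟨(SimpleGraph.Walk.ofSupport (G := tarGraph G c k) L hL hchain).copy hS hS', ?_⟩
    obtain ⟨m, hm⟩ := Nat.exists_eq_succ_of_ne_zero (List.length_pos_iff.2 hL).ne'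
    have hlen' := SimpleGraph.Walk.length_ofSupport (G := tarGraph G c k) hL hchain
    simp only [SimpleGraph.Walk.length_copy, hlen', hm] at hlen ⊢
    push_cast at hlen
    simpa using ENat.add_left_injective_of_ne_top ENat.one_ne_top hlen
  · rintro ⟨p, rfl⟩
    refine ⟨p.support, ⟨?_, ?_, p.isChain_adj_support⟩, by simp⟩
    · rw [← SimpleGraph.Walk.cons_tail_support]; rfl
    · rw [List.getLast?_eq_some_getLast p.support_ne_nil, SimpleGraph.Walk.getLast_support]

theorem tarGraph_adj_insert {S : Finset V} {x : V} (hx : x ∉ S) (hk : k ≤ S.card)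
    (hcx : ColSet G c (insert x S)) : (tarGraph G c k).Adj S (insert x S) :=
  ⟨hcx.mono (subset_insert x S), hcx, hk, hk.trans (card_le_card (subset_insert x S)),
    card_symmDiff_insert hx⟩

theorem tarGraph_adj_erase {S : Finset V} {x : V} (hx : x ∈ S) (hk : k < S.card)
    (hS : ColSet G c S) : (tarGraph G c k).Adj S (S.erase x) :=
  ⟨hS, hS.mono (erase_subset x S), hk.le, by rw [card_erase_of_mem hx]; omega,
    card_symmDiff_erase hx⟩

theorem card_symmDiff_le_length {A B : Finset V} (p : (tarGraph G c k).Walk A B) :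
    (symmDiff A B).card ≤ p.length := by
  induction p with
  | nil => simp
  | @cons A T B h _ ih =>
    rw [SimpleGraph.Walk.length_cons]
    have : (symmDiff A T).card = 1 := h.2.2.2.2
    have := card_symmDiff_triangle A T B
    omega

namespace LockedIn

variable {U S T : Finset V}

theorem notMem_of_colSet_insert (hl : LockedIn G c k U S) {x : V} (hxS : x ∉ S)
    (hcx : ColSet G c (insert x S)) : x ∉ U := fun hxU => hxS <| by
  rw [← hl.2.2.2 _ (insert_subset hxU hl.2.2.1) hcx (subset_insert x S)]
  exact mem_insert_self x S

theorem exists_notMem_eq_insert_of_adj (hl : LockedIn G c k U S)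
    (h : (tarGraph G c k).Adj S T) : ∃ x ∉ U, T = insert x S := by
  obtain ⟨x, hxS, rfl⟩ := exists_notMem_eq_insert_of_card_symmDiff_eq_one h.2.2.2.2
    (hl.1.trans_le h.2.2.2.1)
  exact ⟨x, hl.notMem_of_colSet_insert hxS h.2.1, rfl⟩

theorem exists_walk_of_walk (hl : LockedIn G c k U S) (hne : S ≠ T)
    (p : (tarGraph G c k).Walk S T) : ∃ x ∉ U, ColSet G c (insert x S) ∧
      ∃ q : (tarGraph G c k).Walk (insert x S) T, p.length = q.length + 1 := by
  cases p with
  | nil => exact absurd rfl hne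
  | cons h q =>
    obtain ⟨x, hx, rfl⟩ := hl.exists_notMem_eq_insert_of_adj h
    exact ⟨x, hx, h.2.1, q, rfl⟩

theorem le_edist {S' : Finset V} (hl : LockedIn G c k U S) (hl' : LockedIn G c k U S')
    (hne : S ≠ S') {n : ℕ∞} (h : ∀ x ∉ U, ∀ y ∉ U, ColSet G c (insert x S) →
      ColSet G c (insert y S') → n ≤ (symmDiff (insert x S) (insert y S')).card + 2) :
    n ≤ (tarGraph G c k).edist S S' := by
  rcases eq_or_ne ((tarGraph G c k).edist S S') ⊤ with htop | htop
  · exact htop ▸ le_top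
  obtain ⟨p, hp⟩ := SimpleGraph.exists_walk_of_edist_ne_top htop
  obtain ⟨x, hx, hcx, q, hpq⟩ := hl.exists_walk_of_walk hne p
  have hne' : S' ≠ insert x S := fun h => hx (hl'.2.2.1 (h ▸ mem_insert_self x S))
  obtain ⟨y, hy, hcy, q', hqq⟩ := hl'.exists_walk_of_walk hne' q.reverse
  rw [← hp, hpq, ← SimpleGraph.Walk.length_reverse, hqq]
  calc n ≤ (symmDiff (insert y S') (insert x S)).card + 2 := by
        rw [symmDiff_comm]; exact h x hx y hy hcx hcy
    _ ≤ q'.length + 2 := by gcongr; exact_mod_cast card_symmDiff_le_length q'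
    _ = ↑(q'.length + 1 + 1) := by push_cast; ring

theorem exists_colSet_insert [Fintype V] (hl : LockedIn G c k U S) (hn : ¬ Locked G c k S) :
    ∃ x ∉ U, ColSet G c (insert x S) := by
  obtain ⟨T, -, hT, hST, hTS⟩ : ∃ T ⊆ univ, ColSet G c T ∧ S ⊆ T ∧ T ≠ S := by
    simpa [Locked, LockedIn, hl.1, hl.2.1] using hn
  obtain ⟨x, hxT, hxS⟩ := exists_of_ssubset (ssubset_of_subset_of_ne hST hTS.symm)
  have hcx : ColSet G c (insert x S) := hT.mono (insert_subset hxT hST)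
  exact ⟨x, hl.notMem_of_colSet_insert hxS hcx, hcx⟩

end LockedIn

end Reconfiguration

namespace IsIntervalModel

variable [DecidableEq V] {G : SimpleGraph V} {l r : V → ℝ} {c k : ℕ}

theorem edist_le_card_symmDiff (hm : IsIntervalModel G l r) {A B : Finset V}
    (hA : ColSet G c A) (hB : ColSet G c B) (hcard : A.card = B.card) (hk : k < A.card) :
    (tarGraph G c k).edist A B ≤ (symmDiff A B).card := by
  induction hn : (symmDiff A B).card using Nat.strong_induction_on generalizing A B with
  | _ n ih =>
  rcases (symmDiff A B).eq_empty_or_nonempty with hAB | hAB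
  · rw [symmDiff_eq_bot.1 hAB, SimpleGraph.edist_self]
    exact zero_le
  obtain ⟨b, hbAB, hbmin⟩ := (symmDiff A B).exists_min_image r hAB
  wlog hb : b ∈ B \ A generalizing A B
  · rw [SimpleGraph.edist_comm]
    rw [symmDiff_comm] at hn hAB hbAB hbmin
    exact this hB hA hcard.symm (hcard ▸ hk) hn hAB hbAB hbmin
      (mem_sdiff.2 ((mem_symmDiff.1 hbAB).resolve_left fun h => hb (mem_sdiff.2 h)))
  have hAB' : (A \ B).Nonempty := by
    rw [← card_pos, card_sdiff_comm hcard, card_pos]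
    exact ⟨b, hb⟩
  obtain ⟨a, ha, hA'⟩ := hm.exists_colSet_exchange hA hB hb
    (fun x hx => hbmin x (mem_symmDiff.2 (Or.inl (mem_sdiff.1 hx)))) hAB'
  have haA := (mem_sdiff.1 ha).1
  have hbA : b ∉ A.erase a := fun h => (mem_sdiff.1 hb).2 (mem_of_mem_erase h)
  have hcard_erase : (A.erase a).card + 1 = A.card := card_erase_add_one haA
  have hcard' : (insert b (A.erase a)).card = A.card := by
    rw [card_insert_of_notMem hbA, hcard_erase]
  have hn' : (symmDiff (insert b (A.erase a)) B).card + 2 = n := by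
    have hb' : b ∈ (symmDiff A B).erase a :=
      mem_erase.2 ⟨fun h => (mem_sdiff.1 ha).2 (h ▸ (mem_sdiff.1 hb).1), hbAB⟩
    have := card_erase_add_one hb'
    have := card_erase_add_one (mem_symmDiff.2 (Or.inl (mem_sdiff.1 ha)))
    rw [symmDiff_insert_erase ha hb]
    omega
  let step : (tarGraph G c k).Walk A (insert b (A.erase a)) :=
    .cons (tarGraph_adj_erase haA hk hA) (.cons (tarGraph_adj_insert hbA (by omega) hA') .nil)
  calc (tarGraph G c k).edist A B
      ≤ (tarGraph G c k).edist A (insert b (A.erase a)) +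
          (tarGraph G c k).edist (insert b (A.erase a)) B := SimpleGraph.edist_triangle
    _ ≤ 2 + ↑(n - 2) := add_le_add (SimpleGraph.edist_le step)
          (ih _ (by omega) hA' hB (hcard'.trans hcard) (hcard' ▸ hk) (by omega))
    _ = n := by norm_cast; omega

theorem edist_le_card_symmDiff_insert_add_two (hm : IsIntervalModel G l r) {S S' : Finset V}
    {x y : V} (hS : S.card = k) (hS' : S'.card = k) (hx : x ∉ S) (hy : y ∉ S')
    (hcx : ColSet G c (insert x S)) (hcy : ColSet G c (insert y S')) :
    (tarGraph G c k).edist S S' ≤ (symmDiff (insert x S) (insert y S')).card + 2 := by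
  have hxS := tarGraph_adj_insert hx hS.ge hcx
  have hyS' := (tarGraph_adj_insert hy hS'.ge hcy).symm
  calc (tarGraph G c k).edist S S'
      ≤ (tarGraph G c k).edist S (insert x S) + (tarGraph G c k).edist (insert x S) S' :=
        SimpleGraph.edist_triangle
    _ ≤ (tarGraph G c k).edist S (insert x S) + ((tarGraph G c k).edist (insert x S) (insert y S')
          + (tarGraph G c k).edist (insert y S') S') := by
        gcongr
        exact SimpleGraph.edist_triangle
    _ ≤ 1 + ((symmDiff (insert x S) (insert y S')).card + 1) := by
        gcongr
        · exact (SimpleGraph.edist_eq_one_iff_adj.2 hxS).le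
        · exact hm.edist_le_card_symmDiff hcx hcy (by simp [card_insert_of_notMem, hx, hy, hS, hS'])
            (by simp [card_insert_of_notMem, hx, hS])
        · exact (SimpleGraph.edist_eq_one_iff_adj.2 hyS').le
    _ = _ := by ring

end IsIntervalModel

theorem interval_dist_two_locked_general {V : Type*} [Fintype V] [DecidableEq V]
    (G : SimpleGraph V) (hG : IsIntervalGraph G) (c k : ℕ) (S S' : Finset V)
    (hne : S ≠ S')
    (hnlG : ¬ Locked G c k S) (hnlG' : ¬ Locked G c k S')
    (hl : LockedIn G c k (S ∪ S') S) (hl' : LockedIn G c k (S ∪ S') S') :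
    ((∃ v ∉ S ∪ S', ColSet G c (insert v S) ∧ ColSet G c (insert v S')) →
        TARDist G c k S S' = ((symmDiff S S').card : ℕ∞) + 2) ∧
    ((¬ ∃ v ∉ S ∪ S', ColSet G c (insert v S) ∧ ColSet G c (insert v S')) →
        TARDist G c k S S' = ((symmDiff S S').card : ℕ∞) + 4) := by
  obtain ⟨l, r, hm⟩ : ∃ l r, IsIntervalModel G l r := hG
  have upper : ∀ x ∉ S ∪ S', ∀ y ∉ S ∪ S', ColSet G c (insert x S) → ColSet G c (insert y S') →
      (tarGraph G c k).edist S S' ≤ (symmDiff (insert x S) (insert y S')).card + 2 :=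
    fun x hx y hy => hm.edist_le_card_symmDiff_insert_add_two hl.1 hl'.1
      (fun h => hx (mem_union_left _ h)) (fun h => hy (mem_union_right _ h))
  rw [tarDist_eq_edist]
  constructor
  · rintro ⟨v, hv, hcv, hcv'⟩
    refine le_antisymm ?_ (hl.le_edist hl' hne fun x hx y hy _ _ => ?_)
    · simpa [card_symmDiff_insert_insert hv hv] using upper v hv v hv hcv hcv'
    · rw [card_symmDiff_insert_insert hx hy]
      split_ifs
      · simp
      · norm_cast
        omega
  · intro hno
    have hxy : ∀ x ∉ S ∪ S', ∀ y, ColSet G c (insert x S) → ColSet G c (insert y S') → x ≠ y := by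
      rintro x hx y hcx hcy rfl
      exact hno ⟨x, hx, hcx, hcy⟩
    obtain ⟨v, hv, hcv⟩ := hl.exists_colSet_insert hnlG
    obtain ⟨w, hw, hcw⟩ := hl'.exists_colSet_insert hnlG'
    refine le_antisymm ?_ (hl.le_edist hl' hne fun x hx y hy hcx hcy => ?_)
    · refine (upper v hv w hw hcv hcw).trans_eq ?_
      rw [card_symmDiff_insert_insert hv hw, if_neg (hxy v hv w hcv hcw)]
      push_cast
      ring
    · rw [card_symmDiff_insert_insert hx hy, if_neg (hxy x hx y hcx hcy)]
      exact le_of_eq (by push_cast; ring)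

theorem interval_dist_two_locked {V : Type*} [Fintype V] [DecidableEq V]
    (G : SimpleGraph V) (hG : IsIntervalGraph G) (c k : ℕ) (S S' : Finset V)
    (hne : S ≠ S') (hS : ColSet G c S) (hS' : ColSet G c S')
    (hk : k ≤ S.card) (hk' : k ≤ S'.card)
    (hnlG : ¬ Locked G c k S) (hnlG' : ¬ Locked G c k S')
    (hl : LockedIn G c k (S ∪ S') S) (hl' : LockedIn G c k (S ∪ S') S') :
    ((∃ v ∉ S ∪ S', ColSet G c (insert v S) ∧ ColSet G c (insert v S')) →
        TARDist G c k S S' = ((symmDiff S S').card : ℕ∞) + 2) ∧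
    ((¬ ∃ v ∉ S ∪ S', ColSet G c (insert v S) ∧ ColSet G c (insert v S')) →
        TARDist G c k S S' = ((symmDiff S S').card : ℕ∞) + 4) :=
  interval_dist_two_locked_general G hG c k S S' hne hnlG hnlG' hl hl'
end

section
/- Let G = (K, I; E) be a split graph with clique K and independent set I, and let C ⊆ K with |C| ≤ c. Define T_C = C ∪ I if |C| < c, and T_C = C ∪ (I \ {u ∈ I : C ⊆ N(u)}) if |C| = c. Then T_C is a c-colorable set in G. -/
open Finset

variable {V : Type*}

/-- For a split graph with independent part `I`, the canonical maximal `c`-colorable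
set with clique part `C`. -/
def splitTC (G : SimpleGraph V) [DecidableEq V] [DecidableRel G.Adj]
    (c : ℕ) (I C : Finset V) : Finset V :=
  if C.card < c then C ∪ I
  else C ∪ I.filter (fun u => ¬ ∀ v ∈ C, G.Adj v u)

theorem TC_colorable {V : Type*} [DecidableEq V] (G : SimpleGraph V)
    [DecidableRel G.Adj] (K I : Finset V)
    (hclique : G.IsClique K) (hindep : ∀ u ∈ I, ∀ v ∈ I, ¬ G.Adj u v)
    (hdisj : Disjoint K I) (hcover : ∀ v : V, v ∈ K ∨ v ∈ I) (c : ℕ) (C : Finset V) (hCK : C ⊆ K) (hCc : C.card ≤ c) :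
    ColSet G c (splitTC G c I C) := by
  classical
  let e := C.equivFin
  let f : V → ℕ := fun v =>
    if h : v ∈ C then (e ⟨v, h⟩ : ℕ)
    else if hx : ∃ w, w ∈ C ∧ ¬ G.Adj w v then (e ⟨hx.choose, hx.choose_spec.1⟩ : ℕ)
    else C.card
  have hfC : ∀ v (h : v ∈ C), f v = (e ⟨v, h⟩ : ℕ) := fun v h => by simp only [f, dif_pos h]
  have einj : ∀ (a : V) (ha : a ∈ C) (b : V) (hb : b ∈ C),
      (e ⟨a, ha⟩ : ℕ) = (e ⟨b, hb⟩ : ℕ) → a = b := by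
    intro a ha b hb h
    have := e.injective (Fin.val_injective h)
    exact congrArg Subtype.val this
  have hmemI : ∀ v ∈ splitTC G c I C, v ∉ C → v ∈ I := by
    intro v hv hvc
    unfold splitTC at hv
    split_ifs at hv with h
    · exact (Finset.mem_union.1 hv).resolve_left hvc
    · exact (Finset.mem_filter.1 ((Finset.mem_union.1 hv).resolve_left hvc)).1
  have hflt : ∀ v ∈ splitTC G c I C, f v < c := by
    intro v hv
    by_cases h : v ∈ C
    · exact lt_of_lt_of_le ((hfC v h) ▸ (e ⟨v, h⟩).isLt) hCc
    · simp only [f, dif_neg h]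
      split_ifs with hx
      · exact lt_of_lt_of_le (e _).isLt hCc
      · unfold splitTC at hv
        split_ifs at hv with h2
        · exact h2
        · exfalso
          have := (Finset.mem_filter.1 ((Finset.mem_union.1 hv).resolve_left h)).2
          push_neg at this
          obtain ⟨w, hw, hwv⟩ := this
          exact hx ⟨w, hw, hwv⟩
  have hne : ∀ a ∈ splitTC G c I C, ∀ b ∈ splitTC G c I C, G.Adj a b → f a ≠ f b := by
    have key : ∀ a (ha : a ∈ C), ∀ b, b ∉ C → G.Adj a b → f a ≠ f b := by
      intro a ha b hbc hab
      rw [hfC a ha]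
      simp only [f, dif_neg hbc]
      split_ifs with hx
      · intro h
        have : a = hx.choose := einj a ha _ hx.choose_spec.1 h
        exact hx.choose_spec.2 (this ▸ hab)
      · exact Nat.ne_of_lt (e ⟨a, ha⟩).isLt
    intro a ha b hb hab
    by_cases hac : a ∈ C <;> by_cases hbc : b ∈ C
    · rw [hfC a hac, hfC b hbc]
      intro h
      exact hab.ne (einj a hac b hbc h)
    · exact key a hac b hbc hab
    · exact fun h => key b hbc a hac hab.symm h.symm
    · exact absurd hab (hindep a (hmemI a ha hac) b (hmemI b hb hbc))
  refine ⟨SimpleGraph.Coloring.mk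
    (fun x => ⟨f x.1, hflt x.1 (Finset.mem_coe.mp x.2)⟩) ?_⟩
  rintro ⟨a, ha⟩ ⟨b, hb⟩ hadj h
  exact hne a (Finset.mem_coe.mp ha) b (Finset.mem_coe.mp hb) hadj
    (by simpa using congrArg Fin.val h)
end
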